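/- arXiv:1504.05122 — 7 statements merged into one kernel-verified Lean document; each statement's English description precedes it below -/
import Mathlib

section
/- Let I be a finite nonempty index set, v : I → ℝ, and c : I → ℝ with c i > 0 for every i ∈ I. Let ρ* = max_{i ∈ I} (v i / c i). Then for every p ∈ I, p attains the maximum of i ↦ v i / c i over I if and only if p attains the maximum of i ↦ v i − ρ* · c i over I. -/
theorem stmt_1 {I : Type*} [Fintype I] [Nonempty I] (v c : I → ℝ)
    (hc : ∀ i, 0 < c i) (ρ : ℝ)
    (hρ : ρ = Finset.univ.sup' Finset.univ_nonempty (fun i => v i / c i)) (p : I) :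
    (∀ i, v i / c i ≤ v p / c p) ↔ (∀ i, v i - ρ * c i ≤ v p - ρ * c p) := by
  have hle : ∀ i, v i / c i ≤ ρ := by
    intro i
    rw [hρ]
    exact Finset.le_sup' (fun i => v i / c i) (Finset.mem_univ i)
  obtain ⟨j, -, hj⟩ := Finset.exists_mem_eq_sup' (Finset.univ_nonempty (α := I))
    (fun i => v i / c i)
  have hjρ : v j / c j = ρ := by rw [hρ, hj]
  have key : ∀ i, v i - ρ * c i ≤ 0 := fun i => by
    have := (div_le_iff₀ (hc i)).mp (hle i)
    nlinarith [this]
  have hj0 : v j - ρ * c j = 0 := by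
    have := (div_eq_iff (hc j).ne').mp hjρ
    linarith
  constructor
  · intro hp i
    have hpρ : v p / c p = ρ := le_antisymm (hle p) (hjρ ▸ hp j)
    have hp0 : v p - ρ * c p = 0 := by
      have := (div_eq_iff (hc p).ne').mp hpρ
      linarith
    rw [hp0]; exact key i
  · intro hp i
    have hp0 : 0 ≤ v p - ρ * c p := hj0 ▸ hp j
    have hρp : ρ ≤ v p / c p := (le_div_iff₀ (hc p)).mpr (by linarith)
    exact (hle i).trans hρp
end

section
/- Let D > 0 and ρ ∈ ℝ. For every h ∈ ℝ with h ≠ −D, the point (w, l) = (ρ/2, −ρ/2) lies on the line l = ((D − h)/(D + h))·w − (D/(D + h))·ρ. Moreover, if h₁ ≠ h₂ are two such values (both ≠ −D) and a point (w, l) lies on both corresponding lines, then (w, l) = (ρ/2, −ρ/2). -/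
theorem stmt_8 (D ρ : ℝ) (hD : 0 < D) :
    (∀ h : ℝ, h ≠ -D →
      -(ρ / 2) = ((D - h) / (D + h)) * (ρ / 2) - (D / (D + h)) * ρ) ∧
    (∀ h₁ h₂ : ℝ, h₁ ≠ -D → h₂ ≠ -D → h₁ ≠ h₂ → ∀ w l : ℝ,
      l = ((D - h₁) / (D + h₁)) * w - (D / (D + h₁)) * ρ →
      l = ((D - h₂) / (D + h₂)) * w - (D / (D + h₂)) * ρ →
      w = ρ / 2 ∧ l = -(ρ / 2)) := by
  constructor
  · intro h hh
    have hne : D + h ≠ 0 := by intro h0; apply hh; linarith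
    field_simp
    ring
  · intro h₁ h₂ h1 h2 hne w l e1 e2
    have d1 : D + h₁ ≠ 0 := by intro h0; apply h1; linarith
    have d2 : D + h₂ ≠ 0 := by intro h0; apply h2; linarith
    have e1' : l * (D + h₁) = (D - h₁) * w - D * ρ := by
      field_simp at e1; linarith
    have e2' : l * (D + h₂) = (D - h₂) * w - D * ρ := by
      field_simp at e2; linarith
    have key : (h₂ - h₁) * (l + w) = 0 := by nlinarith
    have hlw : l = -w := by
      have : h₂ - h₁ ≠ 0 := fun h0 => hne (by linarith)
      have := mul_eq_zero.1 key
      rcases this with h | h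
      · exact absurd h ‹h₂ - h₁ ≠ 0›
      · linarith
    have hw : w = ρ / 2 := by
      rw [hlw] at e1'
      have : (2 * w - ρ) * D = 0 := by nlinarith
      have hD' : D ≠ 0 := ne_of_gt hD
      rcases mul_eq_zero.1 this with h | h
      · linarith
      · exact absurd h hD'
    exact ⟨hw, by rw [hlw, hw]⟩
end

section
/- Let ρ, m, Cγ, w_S, l_S, w_T, l_T be real numbers with m ≥ 0, w_S ≠ ρ/2, and Sγ ≠ ρ/2, where Sγ = (m·w_S − l_S)/(m + 1) and S₁ = (w_S − l_S)/2. Suppose (w_T, l_T) satisfies both l_T = m·w_T − (1 + m)·Cγ and (l_T + ρ/2)·(w_S − ρ/2) = (l_S + ρ/2)·(w_T − ρ/2). Then (w_T − l_T) − (w_S − l_S) = 2·(ρ/2 − S₁)·(Cγ − Sγ)/(ρ/2 − Sγ). -/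
/-!
Both the 1-projection and the m-projection of a point are affine functionals of it which take
the value `ρ/2` at `P = (ρ/2, -ρ/2)`. On the line through `P` and `S` they are therefore
proportional: `(T₁ - ρ/2)(Sγ - ρ/2) = (S₁ - ρ/2)(Tγ - ρ/2)`. Since `T` lies on the edge line,
`Tγ = Cγ`, and solving for `T₁ - S₁` gives the formula.
-/

noncomputable def oneProj (w l : ℝ) : ℝ := (w - l) / 2

noncomputable def slopeProj (m w l : ℝ) : ℝ := (m * w - l) / (m + 1)

lemma slopeProj_of_eq {m C w l : ℝ} (hm : m + 1 ≠ 0) (h : l = m * w - (1 + m) * C) :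
    slopeProj m w l = C := by
  rw [slopeProj, div_eq_iff hm, h]
  ring

/-- `h` says that `(wT, lT)` and `(wS, lS)` lie on a common line through `(a, -a)`. -/
lemma projections_proportional {m a wS lS wT lT : ℝ} (hm : m + 1 ≠ 0)
    (h : (lT + a) * (wS - a) = (lS + a) * (wT - a)) :
    (oneProj wT lT - a) * (slopeProj m wS lS - a) =
      (oneProj wS lS - a) * (slopeProj m wT lT - a) := by
  unfold oneProj slopeProj
  field_simp
  linear_combination (1 - m) * h

theorem stmt_9_general (ρ m Cγ wS lS wT lT Sγ S₁ : ℝ) (hm : 0 ≤ m)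
    (hSγ : Sγ = (m * wS - lS) / (m + 1)) (hS₁ : S₁ = (wS - lS) / 2)
    (hSg : Sγ ≠ ρ / 2)
    (hT : lT = m * wT - (1 + m) * Cγ)
    (hST : (lT + ρ / 2) * (wS - ρ / 2) = (lS + ρ / 2) * (wT - ρ / 2)) :
    (wT - lT) - (wS - lS) = 2 * (ρ / 2 - S₁) * (Cγ - Sγ) / (ρ / 2 - Sγ) := by
  have hm1 : m + 1 ≠ 0 := by positivity
  have hprop := projections_proportional hm1 hST
  rw [slopeProj_of_eq hm1 hT] at hprop
  unfold oneProj slopeProj at hprop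
  rw [← hSγ, ← hS₁] at hprop
  rw [eq_div_iff (sub_ne_zero.mpr hSg.symm)]
  linear_combination (-2) * hprop + (2 * (ρ / 2 - Sγ)) * hS₁

theorem stmt_9 (ρ m Cγ wS lS wT lT Sγ S₁ : ℝ) (hm : 0 ≤ m)
    (hSγ : Sγ = (m * wS - lS) / (m + 1)) (hS₁ : S₁ = (wS - lS) / 2)
    (hwS : wS ≠ ρ / 2) (hSg : Sγ ≠ ρ / 2)
    (hT : lT = m * wT - (1 + m) * Cγ)
    (hST : (lT + ρ / 2) * (wS - ρ / 2) = (lS + ρ / 2) * (wT - ρ / 2)) :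
    (wT - lT) - (wS - lS) = 2 * (ρ / 2 - S₁) * (Cγ - Sγ) / (ρ / 2 - Sγ) :=
  stmt_9_general ρ m Cγ wS lS wT lT Sγ S₁ hm hSγ hS₁ hSg hT hST
end

section
/- Let r, cγ, s₁, s₁', s, s' be real numbers with cγ < r, s₁' ≤ s₁ ≤ r, and s' ≤ s ≤ cγ. Then 2·(r − s₁)·(cγ − s)/(r − s) ≤ 2·(r − s₁')·(cγ − s')/(r − s'). Moreover, if s' < s and s₁ < r, the inequality is strict. -/
theorem stmt_10 (r cγ s₁ s₁' s s' : ℝ) (hcr : cγ < r)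
    (h₁ : s₁' ≤ s₁) (h₂ : s₁ ≤ r) (h₃ : s' ≤ s) (h₄ : s ≤ cγ) :
    2 * (r - s₁) * (cγ - s) / (r - s) ≤ 2 * (r - s₁') * (cγ - s') / (r - s') ∧
    (s' < s → s₁ < r →
      2 * (r - s₁) * (cγ - s) / (r - s) < 2 * (r - s₁') * (cγ - s') / (r - s')) := by
  have hrs : (0:ℝ) < r - s := by linarith
  have hrs' : (0:ℝ) < r - s' := by linarith
  constructor
  · rw [div_le_div_iff₀ hrs hrs']
    nlinarith [mul_nonneg (mul_nonneg (sub_nonneg.2 h₁) (sub_nonneg.2 h₄)) hrs'.le,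
      mul_nonneg (by linarith : (0:ℝ) ≤ r - s₁')
        (mul_nonneg (sub_nonneg.2 h₃) (by linarith : (0:ℝ) ≤ r - cγ))]
  · intro hss hsr
    rw [div_lt_div_iff₀ hrs hrs']
    nlinarith [mul_nonneg (mul_nonneg (sub_nonneg.2 h₁) (sub_nonneg.2 h₄)) hrs'.le,
      mul_nonneg (mul_nonneg (sub_nonneg.2 h₂) (sub_nonneg.2 h₄)) (sub_nonneg.2 h₃),
      mul_pos (mul_pos (sub_pos.2 hsr) (sub_pos.2 hss)) (sub_pos.2 hcr),
      mul_nonneg (mul_nonneg (sub_nonneg.2 h₁) (sub_nonneg.2 h₃)) hrs.le]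
end

section
/- Let a ≤ b be real numbers and let f, g : ℝ → ℝ be continuous on [a, b], with f monotone nondecreasing on [a, b], f(a) = 0, g monotone nonincreasing on [a, b], and g(b) = 0. Then there exists x* ∈ [a, b] such that f(x*) = g(x*) and for every x ∈ [a, b], max(f(x*), g(x*)) ≤ max(f(x), g(x)). -/
theorem stmt_14 (a b : ℝ) (hab : a ≤ b) (f g : ℝ → ℝ)
    (hfc : ContinuousOn f (Set.Icc a b)) (hgc : ContinuousOn g (Set.Icc a b))
    (hfm : MonotoneOn f (Set.Icc a b)) (hfa : f a = 0)
    (hgm : AntitoneOn g (Set.Icc a b)) (hgb : g b = 0) :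
    ∃ x ∈ Set.Icc a b, f x = g x ∧
      ∀ y ∈ Set.Icc a b, max (f x) (g x) ≤ max (f y) (g y) := by
  have ha : a ∈ Set.Icc a b := ⟨le_refl a, hab⟩
  have hb : b ∈ Set.Icc a b := ⟨hab, le_refl b⟩
  have hga : 0 ≤ g a := hgb ▸ hgm ha hb hab
  have hfb : 0 ≤ f b := hfa ▸ hfm ha hb hab
  have hc : ContinuousOn (fun t => f t - g t) (Set.Icc a b) := hfc.sub hgc
  have hiv : (0 : ℝ) ∈ Set.Icc (f a - g a) (f b - g b) := by
    constructor <;> simp [hfa, hgb] <;> linarith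
  obtain ⟨x, hx, hfg⟩ := intermediate_value_Icc hab hc hiv
  have hfg' : f x = g x := by
    have h0 : f x - g x = 0 := hfg
    linarith
  refine ⟨x, hx, hfg', fun y hy => ?_⟩
  rcases le_total y x with h | h
  · calc max (f x) (g x) = g x := by rw [hfg']; simp
      _ ≤ g y := hgm hy hx h
      _ ≤ max (f y) (g y) := le_max_right _ _
  · calc max (f x) (g x) = f x := by rw [hfg']; simp
      _ ≤ f y := hfm hx hy h
      _ ≤ max (f y) (g y) := le_max_left _ _
end

section
/- Fix L > 0. For w > 0 and α ∈ (0, 1], consider the equation α·L/(α·w + 2·L) = (L·(1 − α) + α·w + √(α·w·(2·L·(1 − α) + α·w)))/(2·L). If α : (0, ∞) → (0, 1] is a function such that α(w) satisfies this equation for all sufficiently small w > 0, then α(w) → 1/2 as w → 0⁺. Moreover, for all w, L > 0, (1/2)·w·L/((1/2)·w + 2·L) = w/(4 + w/L) < w/4. -/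
set_option maxHeartbeats 1000000 in
theorem stmt_17 (L : ℝ) (hL : 0 < L) (α : ℝ → ℝ)
    (hrange : ∀ w > (0 : ℝ), α w ∈ Set.Ioc (0 : ℝ) 1)
    (heq : ∀ᶠ w in nhdsWithin 0 (Set.Ioi (0 : ℝ)),
      α w * L / (α w * w + 2 * L) =
        (L * (1 - α w) + α w * w +
          Real.sqrt (α w * w * (2 * L * (1 - α w) + α w * w))) / (2 * L)) :
    Filter.Tendsto α (nhdsWithin 0 (Set.Ioi (0 : ℝ))) (nhds (1 / 2)) ∧
    ∀ w > (0 : ℝ), ∀ L' > (0 : ℝ),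
      (1 / 2) * w * L' / ((1 / 2) * w + 2 * L') = w / (4 + w / L') ∧
      w / (4 + w / L') < w / 4 := by
  constructor
  · -- squeeze between 1/2 and g
    set g : ℝ → ℝ := fun w =>
      1 / 2 + (3 * L * w + w ^ 2 + Real.sqrt (w * (2 * L + w)) * (w + 2 * L)) / (4 * L ^ 2)
      with hgdef
    have hgcont : Continuous g := by
      apply Continuous.add continuous_const
      apply Continuous.div_const
      apply Continuous.add (by continuity)
      exact ((Real.continuous_sqrt.comp (by continuity)).mul (by continuity))
    have hg0 : g 0 = 1 / 2 := by simp [hgdef]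
    have hgt : Filter.Tendsto g (nhdsWithin 0 (Set.Ioi (0 : ℝ))) (nhds (1 / 2)) := by
      have := hgcont.tendsto 0
      rw [hg0] at this
      exact this.mono_left nhdsWithin_le_nhds
    have hbounds : ∀ᶠ w in nhdsWithin 0 (Set.Ioi (0 : ℝ)),
        1 / 2 ≤ α w ∧ α w ≤ g w := by
      filter_upwards [heq, self_mem_nhdsWithin] with w hw hw0
      have hw0 : (0 : ℝ) < w := hw0
      obtain ⟨ha0, ha1⟩ := hrange w hw0
      set a := α w with ha
      have hr : 0 ≤ a * w * (2 * L * (1 - a) + a * w) := by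
        have h1 : 0 ≤ a * w := by positivity
        have h2 : 0 ≤ 2 * L * (1 - a) + a * w := by nlinarith
        exact mul_nonneg h1 h2
      set s := Real.sqrt (a * w * (2 * L * (1 - a) + a * w)) with hs
      have hs0 : 0 ≤ s := Real.sqrt_nonneg _
      have hden : a * w + 2 * L > 0 := by nlinarith
      have key : 2 * a * L ^ 2 = (L * (1 - a) + a * w + s) * (a * w + 2 * L) := by
        field_simp at hw
        nlinarith [hw]
      constructor
      · nlinarith [mul_nonneg hs0 hden.le, mul_pos ha0 hw0, sq_nonneg (a * w),
          mul_nonneg (mul_nonneg (mul_nonneg hL.le hw0.le) ha0.le) (sub_nonneg.2 ha1),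
          mul_nonneg (mul_nonneg hL.le hw0.le) ha0.le]
      · set t := Real.sqrt (w * (2 * L + w)) with ht
        have ht0 : 0 ≤ t := Real.sqrt_nonneg _
        have hst : s ≤ t := Real.sqrt_le_sqrt (by
          nlinarith [mul_nonneg (mul_nonneg hw0.le hL.le) (sq_nonneg (1 - a)),
            mul_nonneg (mul_nonneg hw0.le hw0.le) (mul_nonneg (sub_nonneg.2 ha1) ha0.le),
            mul_nonneg (mul_nonneg hw0.le hw0.le) (sq_nonneg (1 - a)),
            mul_nonneg hw0.le (sub_nonneg.2 ha1)])
        have hL2 : (0 : ℝ) < 4 * L ^ 2 := by positivity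
        rw [hgdef]
        simp only
        rw [← ht, ← sub_le_iff_le_add', le_div_iff₀ hL2]
        have hsub : s * (a * w + 2 * L) ≤ t * (w + 2 * L) := by
          have h1 : a * w + 2 * L ≤ w + 2 * L := by nlinarith
          nlinarith [mul_nonneg hs0 hden.le, mul_nonneg ht0 (by positivity : (0:ℝ) ≤ w + 2*L), mul_le_mul_of_nonneg_left h1 ht0]
        have hterm1 : L * (1 - a) * (a * w) ≤ L * w := by
          nlinarith [mul_nonneg (mul_nonneg hL.le hw0.le) (sq_nonneg (a - 1/2))]
        have hterm2 : a ^ 2 * w ^ 2 ≤ w ^ 2 := by nlinarith [mul_nonneg (mul_nonneg (sub_nonneg.2 ha1) (by linarith : (0:ℝ) ≤ 1 + a)) (sq_nonneg w)]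
        have hterm3 : 2 * a * L * w ≤ 2 * L * w := by nlinarith [mul_nonneg (mul_nonneg (sub_nonneg.2 ha1) hL.le) hw0.le]
        nlinarith [key, hsub, hterm1, hterm2, hterm3]
    exact tendsto_of_tendsto_of_tendsto_of_le_of_le'
      (tendsto_const_nhds) hgt (hbounds.mono fun w h => h.1) (hbounds.mono fun w h => h.2)
  · intro w hw L' hL'
    constructor
    · have h1 : (1 / 2) * w + 2 * L' ≠ 0 := by positivity
      have h2 : (4 : ℝ) + w / L' ≠ 0 := by positivity
      field_simp
      ring
    · apply div_lt_div_of_pos_left hw (by norm_num)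
      have : 0 < w / L' := by positivity
      linarith
end

section
/- Let P, Q, y_A, y_B, m, α, β be real numbers with 0 ≤ P < Q, y_A > 0, y_B ≥ y_A, m ≥ 1, 0 < α ≤ 1, and 0 ≤ β ≤ 1. Define N = α·m·(Q − P) + y_A + β·(y_B − y_A) and x_{C'} = (α·(Q − P)·(m·P − y_A) + (y_A + β·(y_B − y_A))·(P + α·(Q − P)))/N. Then N > 0 and 0 ≤ P ≤ x_{C'} < Q. -/
theorem stmt_18 (P Q yA yB m α β N xC' : ℝ)
    (hP : 0 ≤ P) (hPQ : P < Q) (hyA : 0 < yA) (hyB : yA ≤ yB) (hm : 1 ≤ m)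
    (hα₁ : 0 < α) (hα₂ : α ≤ 1) (hβ₁ : 0 ≤ β) (hβ₂ : β ≤ 1)
    (hN : N = α * m * (Q - P) + yA + β * (yB - yA))
    (hx : xC' = (α * (Q - P) * (m * P - yA) +
      (yA + β * (yB - yA)) * (P + α * (Q - P))) / N) :
    0 < N ∧ 0 ≤ P ∧ P ≤ xC' ∧ xC' < Q := by
  have hd : 0 < Q - P := by linarith
  have hu : 0 < yA + β * (yB - yA) := by nlinarith
  have hNpos : 0 < N := by
    rw [hN]; nlinarith [mul_pos (mul_pos hα₁ (by linarith : (0:ℝ) < m)) hd, mul_nonneg hβ₁ (by linarith : (0:ℝ) ≤ yB - yA)]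
  refine ⟨hNpos, hP, ?_, ?_⟩
  · rw [hx, le_div_iff₀ hNpos, hN]
    nlinarith [mul_nonneg (mul_nonneg hα₁.le hd.le) (mul_nonneg hβ₁ (by linarith : (0:ℝ) ≤ yB - yA))]
  · rw [hx, div_lt_iff₀ hNpos, hN]
    nlinarith [mul_pos (mul_pos hα₁ hd) hd, mul_nonneg (mul_nonneg (by linarith : (0:ℝ) ≤ 1 - α) hd.le) hu.le, mul_pos (mul_pos hα₁ hd) hyA, mul_pos hd hu]
end
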